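/- Let F be a Borel probability measure on [0,1] and for 2 ≤ k ≤ n define λ_{nk} = ∫_{[0,1]} y^{k−2}(1−y)^{n−k} F(dy). Then for every integer n ≥ 2: Σ_{k=2}^n C(n,k) λ_{nk} = ∫_{[0,1]} [ 1 − (1−y)^n − n y (1−y)^{n−1} ] y^{−2} F(dy) = (1/2) n(n−1) E[ (1−W)^{n−2} ], where the integrand in the middle expression is extended continuously at y = 0 by its limit n(n−1)/2, and C(n,k) is the binomial coefficient. -/

import Mathlib

open MeasureTheory Set

/-- Λ-coalescent merger rate `λ_{nk} = ∫ y^{k-2} (1-y)^{n-k} F(dy)`. -/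
noncomputable def lamRate (F : Measure ℝ) (n k : ℕ) : ℝ :=
  ∫ y, y ^ (k - 2) * (1 - y) ^ (n - k) ∂F

/-!
With `h(y) = 1 - (1 - y)^n - n y (1 - y)^(n-1)` (the probability that a Binomial(n, y) variable
is at least 2), the binomial expansion of `(y + (1 - y))^n` gives
`y² ∑_{k ≥ 2} C(n,k) y^(k-2) (1-y)^(n-k) = h(y)`. On the other hand `h(0) = 0` and
`h'(t) = n(n-1) t (1-t)^(n-2)`, so the substitution `t = u y` gives
`h(y) = y² ∫₀¹ n(n-1) u (1 - u y)^(n-2) du`. Dividing by `y²` (and evaluating at `y = 0`, where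
both sides are `C(n,2)`) yields pointwise identities, which are then integrated against `F`.
-/

open Finset

lemma sq_mul_sum_choose_mul_pow (n : ℕ) (y : ℝ) :
    y ^ 2 * ∑ k ∈ Icc 2 n, (n.choose k : ℝ) * (y ^ (k - 2) * (1 - y) ^ (n - k)) =
      1 - (1 - y) ^ n - n * y * (1 - y) ^ (n - 1) := by
  rcases n with _ | _ | m
  · simp
  · simp
  have hbinom := add_pow y (1 - y) (m + 2)
  rw [add_sub_cancel, one_pow, sum_range_succ', sum_range_succ'] at hbinom
  have hshift : y ^ 2 * ∑ k ∈ Icc 2 (m + 2), ((m + 2).choose k : ℝ) *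
        (y ^ (k - 2) * (1 - y) ^ (m + 2 - k)) =
      ∑ k ∈ range (m + 1), y ^ (k + 1 + 1) * (1 - y) ^ (m + 2 - (k + 1 + 1)) *
        ((m + 2).choose (k + 1 + 1) : ℝ) := by
    rw [← Finset.Ico_add_one_right_eq_Icc, sum_Ico_eq_sum_range, mul_sum]
    refine sum_congr (by simp) fun k _ => ?_
    rw [add_comm 2 k, Nat.add_sub_cancel]
    ring
  push_cast at hshift ⊢
  rw [hshift]
  simp only [zero_add, Nat.choose_one_right, Nat.choose_zero_right] at hbinom
  push_cast at hbinom
  linear_combination -hbinom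

lemma hasDerivAt_one_sub_one_sub_pow_sub_mul_pow (n : ℕ) (t : ℝ) :
    HasDerivAt (fun t : ℝ => 1 - (1 - t) ^ n - n * t * (1 - t) ^ (n - 1))
      (n * (n - 1) * t * (1 - t) ^ (n - 2)) t := by
  rcases n with _ | m
  · simpa using hasDerivAt_const t (0 : ℝ)
  have hlin : HasDerivAt (fun t : ℝ => 1 - t) (-1) t := by
    simpa using (hasDerivAt_id t).const_sub 1
  have h := ((hlin.fun_pow (m + 1)).const_sub 1).fun_sub
    (((hasDerivAt_id t).const_mul ((m + 1 : ℕ) : ℝ)).fun_mul (hlin.fun_pow m))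
  simp only [Nat.add_sub_cancel, id_eq] at h ⊢
  refine h.congr_deriv ?_
  rw [show m + 1 - 2 = m - 1 by omega]
  push_cast
  ring

lemma sq_mul_integral_mul_one_sub_mul_pow (n : ℕ) (y : ℝ) :
    y ^ 2 * ∫ u in (0 : ℝ)..1, n * (n - 1) * u * (1 - u * y) ^ (n - 2) =
      1 - (1 - y) ^ n - n * y * (1 - y) ^ (n - 1) := by
  have hderiv : ∀ u ∈ uIcc (0 : ℝ) 1, HasDerivAt
      (fun u : ℝ => 1 - (1 - u * y) ^ n - n * (u * y) * (1 - u * y) ^ (n - 1))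
      (y ^ 2 * (n * (n - 1) * u * (1 - u * y) ^ (n - 2))) u := fun u _ => by
    refine ((hasDerivAt_one_sub_one_sub_pow_sub_mul_pow n (u * y)).comp u
      ((hasDerivAt_id u).mul_const y)).congr_deriv ?_
    ring
  have hcont : Continuous fun u : ℝ => y ^ 2 * (n * (n - 1) * u * (1 - u * y) ^ (n - 2)) := by
    fun_prop
  rw [← intervalIntegral.integral_const_mul,
    intervalIntegral.integral_eq_sub_of_hasDerivAt hderiv (hcont.intervalIntegrable 0 1)]
  rcases n with _ | m <;> simp

lemma eq_ite_div_sq_of_sq_mul_eq {a b c y : ℝ} (hzero : y = 0 → a = c) (hsq : y ^ 2 * a = b) :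
    a = if y = 0 then c else b / y ^ 2 := by
  split_ifs with hy
  · exact hzero hy
  · rw [eq_div_iff (pow_ne_zero 2 hy), mul_comm, hsq]

lemma sum_choose_mul_pow_mul_pow_eq (n : ℕ) (y : ℝ) :
    ∑ k ∈ Icc 2 n, (n.choose k : ℝ) * (y ^ (k - 2) * (1 - y) ^ (n - k)) =
      if y = 0 then (n : ℝ) * (n - 1) / 2
      else (1 - (1 - y) ^ n - n * y * (1 - y) ^ (n - 1)) / y ^ 2 := by
  refine eq_ite_div_sq_of_sq_mul_eq (fun hy => ?_) (sq_mul_sum_choose_mul_pow n y)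
  subst hy
  rw [← Nat.cast_choose_two, sum_eq_single 2]
  · simp
  · intro k hk hk2
    have hk : k - 2 ≠ 0 := by grind
    simp [hk]
  · intro h2
    simp [Nat.choose_eq_zero_of_lt (show n < 2 by simpa using h2)]

lemma half_mul_integral_one_sub_mul_pow_eq (n : ℕ) (y : ℝ) :
    (1 / 2) * (n : ℝ) * (n - 1) * ∫ u in Ioo (0 : ℝ) 1, (1 - u * y) ^ (n - 2) * (2 * u) =
      if y = 0 then (n : ℝ) * (n - 1) / 2
      else (1 - (1 - y) ^ n - n * y * (1 - y) ^ (n - 1)) / y ^ 2 := by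
  have hinterval : (1 / 2) * (n : ℝ) * (n - 1) *
      ∫ u in Ioo (0 : ℝ) 1, (1 - u * y) ^ (n - 2) * (2 * u) =
        ∫ u in (0 : ℝ)..1, n * (n - 1) * u * (1 - u * y) ^ (n - 2) := by
    rw [intervalIntegral.integral_of_le zero_le_one, ← integral_Ioc_eq_integral_Ioo,
      ← integral_const_mul]
    congr 1 with u
    ring
  rw [hinterval]
  refine eq_ite_div_sq_of_sq_mul_eq (fun hy => ?_) (sq_mul_integral_mul_one_sub_mul_pow n y)
  subst hy
  simp only [mul_zero, sub_zero, one_pow, mul_one]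
  rw [intervalIntegral.integral_const_mul, integral_id]
  ring

lemma Continuous.integrable_of_measure_compl_eq_zero {X E : Type*} [MeasurableSpace X]
    [TopologicalSpace X] [OpensMeasurableSpace X] [T2Space X] [NormedAddCommGroup E]
    {μ : Measure X} [IsFiniteMeasureOnCompacts μ] {f : X → E} {K : Set X} (hf : Continuous f)
    (hK : IsCompact K) (hμ : μ Kᶜ = 0) : Integrable f μ := by
  rw [← Measure.restrict_eq_self_of_ae_mem (mem_ae_iff.mpr hμ)]
  exact hf.continuousOn.integrableOn_compact hK

lemma sum_choose_mul_lamRate (F : Measure ℝ) [IsFiniteMeasure F]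
    (hF : F (Icc (0 : ℝ) 1)ᶜ = 0) (n : ℕ) :
    ∑ k ∈ Icc 2 n, (n.choose k : ℝ) * lamRate F n k =
      ∫ y, ∑ k ∈ Icc 2 n, (n.choose k : ℝ) * (y ^ (k - 2) * (1 - y) ^ (n - k)) ∂F := by
  rw [integral_finsetSum _ fun k _ =>
    (by fun_prop : Continuous fun y : ℝ => (n.choose k : ℝ) * (y ^ (k - 2) * (1 - y) ^ (n - k))
      ).integrable_of_measure_compl_eq_zero isCompact_Icc hF]
  simp only [lamRate, integral_const_mul]

theorem stmt4 (F : Measure ℝ) [IsProbabilityMeasure F]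
    (hF : F (Set.Icc (0:ℝ) 1)ᶜ = 0) (n : ℕ) :
    (∑ k ∈ Finset.Icc 2 n, (n.choose k : ℝ) * lamRate F n k)
      = (∫ y, (if y = (0:ℝ) then (n : ℝ) * ((n : ℝ) - 1) / 2
          else (1 - (1 - y) ^ n - n * y * (1 - y) ^ (n - 1)) / y ^ 2) ∂F) ∧
    (∑ k ∈ Finset.Icc 2 n, (n.choose k : ℝ) * lamRate F n k)
      = (1/2) * (n : ℝ) * ((n : ℝ) - 1) *
          ∫ y, (∫ u in Set.Ioo (0:ℝ) 1, (1 - u * y) ^ (n - 2) * (2 * u)) ∂F := by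
  rw [sum_choose_mul_lamRate F hF, ← integral_const_mul]
  simp only [sum_choose_mul_pow_mul_pow_eq, half_mul_integral_one_sub_mul_pow_eq, and_self]
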